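/- arXiv:2311.00512 — 5 statements merged into one kernel-verified Lean document; each statement's English description precedes it below -/
import Mathlib

section
/- Let p be an odd prime and m ≥ 1, and let Tr : GF(p^m) → GF(p) be the trace map. Then Q_0(x) := Tr(x^{p^m+1}) is a nondegenerate quadratic form on GF(p^{2m}) viewed as a vector space over GF(p). -/
/-!
With `q = p ^ m`, the Frobenius `x ↦ x ^ q` is additive and an involution of `K`, so
`(u + v) ^ (q + 1) = u ^ (q + 1) + v ^ (q + 1) + (w + w ^ q)` with `w = u * v ^ q`. Since
`Tr(w + w ^ q)` is the full trace `T(w)` of `K` over `GF(p)`, the polarization is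
`R₀ u v = T(u * v ^ q)`. The trace of the separable extension `K / GF(p)` is surjective and
`v ↦ v ^ q` is bijective, so `R₀ u` vanishes identically only for `u = 0`.
-/

/-- The trace-like map x ↦ x + x^p + ... + x^(p^(m-1)), computed inside the big field. -/
def fieldTr (p m : ℕ) {F : Type} [Field F] (x : F) : F :=
  ∑ i ∈ Finset.range m, x ^ p ^ i

section FieldTr

variable {p : ℕ} {K : Type} [Field K]

theorem pow_pow_eq_self_of_pow_eq_self {a : K} (ha : a ^ p = a) (i : ℕ) : a ^ p ^ i = a := by
  induction i with
  | zero => simp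
  | succ i ih => rw [pow_succ, pow_mul, ih, ha]

theorem fieldTr_mul_of_pow_eq_self (n : ℕ) {a : K} (ha : a ^ p = a) (x : K) :
    fieldTr p n (a * x) = a * fieldTr p n x := by
  simp only [fieldTr, mul_pow, pow_pow_eq_self_of_pow_eq_self ha, Finset.mul_sum]

theorem fieldTr_mul_pow_succ_of_pow_eq_self (n m : ℕ) {a : K} (ha : a ^ p = a) (x : K) :
    fieldTr p n ((a * x) ^ (p ^ m + 1)) = a ^ 2 * fieldTr p n (x ^ (p ^ m + 1)) := by
  have ha2 : (a ^ 2) ^ p = a ^ 2 := by rw [← pow_mul, mul_comm, pow_mul, ha]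
  rw [mul_pow, pow_succ, pow_pow_eq_self_of_pow_eq_self ha, ← sq, fieldTr_mul_of_pow_eq_self n ha2]

theorem fieldTr_add [Fact p.Prime] [CharP K p] (n : ℕ) (x y : K) :
    fieldTr p n (x + y) = fieldTr p n x + fieldTr p n y := by
  simp only [fieldTr, add_pow_char_pow, Finset.sum_add_distrib]

theorem fieldTr_two_mul [Fact p.Prime] [CharP K p] (m : ℕ) (x : K) :
    fieldTr p (2 * m) x = fieldTr p m (x + x ^ p ^ m) := by
  simp only [fieldTr, two_mul, Finset.sum_range_add, pow_add, pow_mul, add_pow_char_pow,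
    Finset.sum_add_distrib]

theorem fieldTr_eq_algebraMap_trace [Fact p.Prime] [Fintype K] [Algebra (ZMod p) K] {n : ℕ}
    (hK : Fintype.card K = p ^ n) (x : K) :
    fieldTr p n x = algebraMap (ZMod p) K (Algebra.trace (ZMod p) K x) := by
  have hn : Module.finrank (ZMod p) K = n := by
    rw [Module.card_eq_pow_finrank (K := ZMod p), ZMod.card] at hK
    exact Nat.pow_right_injective (Fact.out : p.Prime).two_le hK
  rw [FiniteField.algebraMap_trace_eq_sum_pow, hn, Nat.card_zmod, fieldTr]

theorem exists_fieldTr_ne_zero [Fact p.Prime] [Fintype K] [CharP K p] {n : ℕ}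
    (hK : Fintype.card K = p ^ n) : ∃ x : K, fieldTr p n x ≠ 0 := by
  let := ZMod.algebra K p
  obtain ⟨x, hx⟩ := Algebra.trace_surjective (ZMod p) K 1
  exact ⟨x, by simp [fieldTr_eq_algebraMap_trace hK, hx]⟩

end FieldTr

section HermitianTrace

variable {p m : ℕ} {K : Type} [Field K] [Fintype K]

theorem pow_pow_pow_eq_self_of_card_eq (hK : Fintype.card K = p ^ (2 * m)) (x : K) :
    (x ^ p ^ m) ^ p ^ m = x := by
  rw [← pow_mul, ← pow_add, ← two_mul, ← hK, FiniteField.pow_card]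

variable [Fact p.Prime] [CharP K p]

theorem fieldTr_pow_succ_polarization (hK : Fintype.card K = p ^ (2 * m)) (u v : K) :
    fieldTr p m ((u + v) ^ (p ^ m + 1)) - fieldTr p m (u ^ (p ^ m + 1)) -
      fieldTr p m (v ^ (p ^ m + 1)) = fieldTr p (2 * m) (u * v ^ p ^ m) := by
  have hexp : (u + v) ^ (p ^ m + 1) = u ^ (p ^ m + 1) + v ^ (p ^ m + 1) +
      (u * v ^ p ^ m + (u * v ^ p ^ m) ^ p ^ m) := by
    rw [pow_succ, add_pow_char_pow, mul_pow u, pow_pow_pow_eq_self_of_card_eq hK]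
    ring
  rw [hexp, fieldTr_add, fieldTr_add, fieldTr_two_mul]
  ring

theorem eq_zero_of_fieldTr_mul_pow_eq_zero (hK : Fintype.card K = p ^ (2 * m)) {u : K}
    (hu : ∀ v : K, fieldTr p (2 * m) (u * v ^ p ^ m) = 0) : u = 0 := by
  by_contra hu0
  obtain ⟨x, hx⟩ := exists_fieldTr_ne_zero hK
  have := hu ((u⁻¹ * x) ^ p ^ m)
  rw [pow_pow_pow_eq_self_of_card_eq hK, mul_inv_cancel_left₀ hu0] at this
  exact hx this

end HermitianTrace

theorem denniston_stmt4_general (p m : ℕ) (hp : p.Prime)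
    (K : Type) [Field K] [Fintype K] (hK : Fintype.card K = p ^ (2 * m))
    (Q₀ : K → K) (hQdef : ∀ x : K, Q₀ x = fieldTr p m (x ^ (p ^ m + 1)))
    (R₀ : K → K → K) (hRdef : ∀ u v : K, R₀ u v = Q₀ (u + v) - Q₀ u - Q₀ v) :
    (∀ a x : K, a ^ p = a → Q₀ (a * x) = a ^ 2 * Q₀ x) ∧
    (∀ u₁ u₂ v : K, R₀ (u₁ + u₂) v = R₀ u₁ v + R₀ u₂ v) ∧
    (∀ u v₁ v₂ : K, R₀ u (v₁ + v₂) = R₀ u v₁ + R₀ u v₂) ∧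
    (∀ a u v : K, a ^ p = a → R₀ (a * u) v = a * R₀ u v ∧ R₀ u (a * v) = a * R₀ u v) ∧
    (∀ u : K, (∀ v : K, R₀ u v = 0) → u = 0) := by
  have : Fact p.Prime := ⟨hp⟩
  have : CharP K p := charP_of_card_eq_prime_pow hK
  have hR (u v : K) : R₀ u v = fieldTr p (2 * m) (u * v ^ p ^ m) := by
    rw [hRdef, hQdef, hQdef, hQdef, fieldTr_pow_succ_polarization hK]
  refine ⟨fun a x ha => ?_, fun u₁ u₂ v => ?_, fun u v₁ v₂ => ?_, fun a u v ha => ⟨?_, ?_⟩,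
    fun u hu => eq_zero_of_fieldTr_mul_pow_eq_zero hK fun v => hR u v ▸ hu v⟩
  · rw [hQdef, hQdef, fieldTr_mul_pow_succ_of_pow_eq_self _ _ ha]
  · simp only [hR, add_mul, fieldTr_add]
  · simp only [hR, add_pow_char_pow, mul_add, fieldTr_add]
  · rw [hR, hR, mul_assoc, fieldTr_mul_of_pow_eq_self _ ha]
  · rw [hR, hR, mul_pow, pow_pow_eq_self_of_pow_eq_self ha, mul_left_comm,
      fieldTr_mul_of_pow_eq_self _ ha]

/-- Q₀(x) = Tr(x^(p^m+1)) is a nondegenerate quadratic form on GF(p^{2m})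
viewed as a vector space over GF(p) = {a : a^p = a}: Q₀(ax) = a²Q₀(x) for a in GF(p),
the polarization R₀ is GF(p)-bilinear, and R₀ has trivial radical. -/
theorem denniston_stmt4 (p m : ℕ) (hp : p.Prime) (hodd : Odd p) (hm : 1 ≤ m)
    (K : Type) [Field K] [Fintype K] (hK : Fintype.card K = p ^ (2 * m))
    (Q₀ : K → K) (hQdef : ∀ x : K, Q₀ x = fieldTr p m (x ^ (p ^ m + 1)))
    (R₀ : K → K → K) (hRdef : ∀ u v : K, R₀ u v = Q₀ (u + v) - Q₀ u - Q₀ v) :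
    (∀ a x : K, a ^ p = a → Q₀ (a * x) = a ^ 2 * Q₀ x) ∧
    (∀ u₁ u₂ v : K, R₀ (u₁ + u₂) v = R₀ u₁ v + R₀ u₂ v) ∧
    (∀ u v₁ v₂ : K, R₀ u (v₁ + v₂) = R₀ u v₁ + R₀ u v₂) ∧
    (∀ a u v : K, a ^ p = a → R₀ (a * u) v = a * R₀ u v ∧ R₀ u (a * v) = a * R₀ u v) ∧
    (∀ u : K, (∀ v : K, R₀ u v = 0) → u = 0) :=
  denniston_stmt4_general p m hp K hK Q₀ hQdef R₀ hRdef
end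

section
/- Let p be an odd prime and m ≥ 2. The set X = {x ∈ GF(p^{2m}) \ {0} : Tr_{m/1}(x^{p^m+1}) = 0} is a (p^{2m}, p^{2m-1} − p^{m-1}(p−1) − 1, p^{2m-2} − p^{m-1}(p−1) − 2, p^{2m-2} − p^{m-1}) partial difference set in the additive group of GF(p^{2m}). -/
/-- D is a (v,k,λ,μ) partial difference set in the finite abelian group G. -/
def IsPDS {G : Type} [AddCommGroup G] [Fintype G] [DecidableEq G]
    (D : Finset G) (v k l μ : ℕ) : Prop :=
  Fintype.card G = v ∧ D.card = k ∧
    ∀ g : G, g ≠ 0 →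
      ((D ×ˢ D).filter (fun q => q.1 - q.2 = g)).card = if g ∈ D then l else μ

/-!
Write `q = p ^ m` and `Q x = Tr_{K/𝔽_p}(x ^ (q + 1))`, a quadratic form on `K` over `𝔽_p` whose
polar form `2 Tr(x ^ q y)` is nondegenerate. Since `x ^ (q + 1)` lies in `𝔽_q`, where
`Tr_{K/𝔽_p} = 2 Tr_{𝔽_q/𝔽_p}`, the set of the statement is the set of nonzero zeros of `Q`.

The map `x ↦ x ^ (q + 1)` sends `Kˣ` onto `𝔽_qˣ` with fibres of size `q + 1`, and the trace is
not identically zero on `𝔽_q`; hence for a primitive additive character `ψ` of `𝔽_p` every Gauss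
sum `∑ x, ψ (j * Q x)` with `j ≠ 0` equals `-q` (`Q` is elliptic). Counting the zeros of `Q`, and the common zeros of `y ↦ Q y` and
`y ↦ Q (y + g)`, with additive characters and completing the square then gives numbers depending
only on whether `Q g = 0`, and these are `k`, `λ` and `μ`.
-/

open Finset

theorem IsCyclic.sum_comp_pow {G M : Type*} [CommGroup G] [IsCyclic G] [Fintype G]
    [DecidableEq G] [AddCommMonoid M] {a b : ℕ} (hab : Fintype.card G = a * b) (f : G → M) :
    ∑ x, f (x ^ a) = a • ∑ u with u ^ b = 1, f u := by
  have ha : 0 < a := Nat.pos_of_mul_pos_right (hab ▸ Fintype.card_pos)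
  have hcard : Nat.card G = a * b := Nat.card_eq_fintype_card.trans hab
  have hrange : (powMonoidHom a : G →* G).range = (powMonoidHom b).ker := by
    refine Subgroup.eq_of_le_of_card_ge ?_ ?_
    · rintro _ ⟨x, rfl⟩
      simp [MonoidHom.mem_ker, ← pow_mul, ← hab, pow_card_eq_one]
    · rw [IsCyclic.card_powMonoidHom_range, IsCyclic.card_powMonoidHom_ker, hcard,
        Nat.gcd_mul_right_left, Nat.gcd_mul_left_left, Nat.mul_div_cancel_left _ ha]
  have hker : #{x : G | x ^ a = 1} = a := by
    have := IsCyclic.card_powMonoidHom_ker G a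
    rw [hcard, Nat.gcd_mul_right_left] at this
    simpa [Nat.card_eq_fintype_card, ← Fintype.card_subtype, MonoidHom.mem_ker] using this
  have himage : univ.image (· ^ a) = ({u | u ^ b = 1} : Finset G) := by
    ext u
    simpa [MonoidHom.mem_range, MonoidHom.mem_ker] using SetLike.ext_iff.mp hrange u
  rw [sum_comp, himage, smul_sum]
  refine sum_congr rfl fun u hu => ?_
  obtain ⟨y, rfl⟩ : ∃ y, y ^ a = u := by simpa [← himage] using hu
  congr 1
  exact (MonoidHom.card_fiber_eq_of_mem_range (powMonoidHom a) ⟨y, rfl⟩ ⟨1, one_pow a⟩).trans hker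

theorem Fintype.sum_eq_add_sum_units {L M : Type*} [GroupWithZero L] [Fintype L] [DecidableEq L]
    [AddCommMonoid M] (f : L → M) : ∑ y, f y = f 0 + ∑ u : Lˣ, f u := by
  rw [← add_sum_erase _ _ (mem_univ (0 : L))]
  congr 1
  symm
  refine sum_bij' (fun u _ => u) (fun y hy => Units.mk0 y (ne_of_mem_erase hy)) ?_ ?_ ?_ ?_ ?_ <;>
    simp

theorem Finset.card_filter_product_sub_eq {G : Type*} [AddCommGroup G] [DecidableEq G]
    (D : Finset G) (g : G) :
    #((D ×ˢ D).filter fun q => q.1 - q.2 = g) = #(D.filter fun b => b + g ∈ D) := by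
  refine card_nbij' (·.2) (fun b => (b + g, b)) ?_ ?_ ?_ ?_
  · rintro ⟨a, b⟩ h
    simp only [coe_filter, mem_product, Set.mem_ofPred_eq] at h
    obtain ⟨⟨ha, hb⟩, rfl⟩ := h
    simpa using ⟨hb, ha⟩
  · intro b h
    simp_all
  · rintro ⟨a, b⟩ h
    simp only [coe_filter, Set.mem_ofPred_eq] at h
    simp [← h.2]
  · intro b _
    rfl

theorem card_filter_sub_eq_add_ite {G : Type*} [AddCommGroup G] [Fintype G] [DecidableEq G]
    (P : G → Prop) [DecidablePred P] (h0 : P 0) (hneg : ∀ x, P (-x) ↔ P x) {g : G} (hg : g ≠ 0) :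
    #((univ.filter fun x => x ≠ 0 ∧ P x) ×ˢ (univ.filter fun x => x ≠ 0 ∧ P x)
        |>.filter fun q => q.1 - q.2 = g)
      + (if P g then 2 else 0) = #(univ.filter fun y => P y ∧ P (y + g)) := by
  have hkept : (univ.filter fun x => x ≠ 0 ∧ P x).filter
        (fun b => b + g ∈ univ.filter fun x => x ≠ 0 ∧ P x)
      = (univ.filter fun y => P y ∧ P (y + g)).filter fun y => y ≠ 0 ∧ y + g ≠ 0 := by
    ext y
    simp only [mem_filter, mem_univ, true_and]
    tauto
  have hexcluded : #((univ.filter fun y => P y ∧ P (y + g)).filter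
      fun y => ¬(y ≠ 0 ∧ y + g ≠ 0)) = if P g then 2 else 0 := by
    split_ifs with hPg
    · rw [← card_pair (neg_ne_zero.mpr hg).symm]
      congr 1
      ext y
      simp only [mem_filter, mem_univ, true_and, mem_insert, mem_singleton, ne_eq, not_and_or,
        not_not, ← eq_neg_iff_add_eq_zero]
      constructor
      · exact And.right
      · rintro (rfl | rfl) <;> simp [h0, hPg, hneg]
    · rw [card_eq_zero, filter_eq_empty_iff]
      intro y hy
      simp only [mem_filter, mem_univ, true_and] at hy
      refine not_not.mpr ⟨fun h => ?_, fun h => ?_⟩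
      · rw [h, zero_add] at hy
        exact hPg hy.2
      · rw [← eq_neg_iff_add_eq_zero] at h
        rw [h, hneg] at hy
        exact hPg hy.1
  rw [card_filter_product_sub_eq, hkept, ← hexcluded, card_filter_add_card_filter_not]

theorem Nat.add_eq_of_cast_mul_eq {N a b c : ℕ} (hc : c ≠ 0)
    (h : (N : ℂ) * c = b * c - a * c) : N + a = b := by
  refine Nat.eq_of_mul_eq_mul_right (Nat.pos_of_ne_zero hc) ?_
  exact_mod_cast (by linear_combination h : ((N : ℂ) + a) * c = b * c)

theorem QuadraticMap.map_add_smul {R M : Type*} [CommRing R] [AddCommGroup M] [Module R M]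
    (Q : QuadraticForm R M) (y g : M) (c : R) :
    Q (y + c • g) = Q y + c * polar Q y g + c * c * Q g := by
  have h := polar_smul_right Q c y g
  rw [polar, polar, QuadraticMap.map_smul, smul_eq_mul, smul_eq_mul] at h
  rw [polar]
  linear_combination h

section Characters

variable {F V : Type*} [Field F] [Fintype F] [DecidableEq F] [AddCommGroup V] [Module F V]
  [Fintype V] {ψ : AddChar F ℂ}

theorem AddChar.sum_mul_eq_ite (hψ : ψ.IsPrimitive) (a : F) :
    ∑ j, ψ (j * a) = if a = 0 then (Fintype.card F : ℂ) else 0 := by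
  rw [AddChar.sum_mulShift a hψ, Nat.cast_ite, Nat.cast_zero]

theorem AddChar.card_filter_eq_zero_mul {α : Type*} (hψ : ψ.IsPrimitive) (s : Finset α)
    (f : α → F) : (#{x ∈ s | f x = 0} : ℂ) * Fintype.card F = ∑ x ∈ s, ∑ j, ψ (j * f x) := by
  simp_rw [AddChar.sum_mul_eq_ite hψ, ← sum_filter, sum_const, nsmul_eq_mul]

theorem AddChar.card_filter_and_eq_zero_mul {α : Type*} (hψ : ψ.IsPrimitive) (s : Finset α)
    (f g : α → F) :
    (#{x ∈ s | f x = 0 ∧ g x = 0} : ℂ) * Fintype.card F ^ 2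
      = ∑ x ∈ s, ∑ j, ∑ k, ψ (j * f x + k * g x) := by
  simp_rw [AddChar.map_add_eq_mul, ← mul_sum, ← sum_mul, AddChar.sum_mul_eq_ite hψ,
    ite_zero_mul_ite_zero, ← sum_filter, sum_const, nsmul_eq_mul, _root_.sq]

omit [Fintype F] in
theorem AddChar.sum_comp_linearMap_eq_zero (hψ : ψ.IsPrimitive) {L : V →ₗ[F] F} (hL : L ≠ 0) :
    ∑ y, ψ (L y) = 0 := by
  obtain ⟨y₀, hy₀⟩ : ∃ y, L y ≠ 0 := by
    by_contra! h
    exact hL (LinearMap.ext h)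
  obtain ⟨x, hx⟩ := AddChar.ne_one_iff.mp (hψ hy₀)
  refine AddChar.sum_eq_zero_of_ne_one (ψ := ψ.compAddMonoidHom L.toAddMonoidHom)
    (AddChar.ne_one_iff.mpr ⟨x • y₀, ?_⟩)
  simpa [mul_comm] using hx

theorem AddChar.sum_erase_zero_mul_inv (hψ : ψ.IsPrimitive) (c : F) :
    ∑ j ∈ univ.erase 0, ψ (c * j⁻¹) = (if c = 0 then (Fintype.card F : ℂ) else 0) - 1 := by
  have h := add_sum_erase univ (fun j => ψ (c * j⁻¹)) (mem_univ 0)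
  rw [Fintype.sum_equiv (Equiv.inv F) _ (fun u => ψ (u * c)) (fun j => by simp [mul_comm]),
    AddChar.sum_mul_eq_ite hψ] at h
  simp only [inv_zero, mul_zero, AddChar.map_zero_eq_one] at h
  linear_combination h

theorem AddChar.sum_erase_zero_sum_mul_sub (hψ : ψ.IsPrimitive) (t : F) :
    ∑ j ∈ univ.erase 0, ∑ k, ψ (k * t - k * k / j * t)
      = if t = 0 then ((Fintype.card F : ℂ) - 1) * Fintype.card F else Fintype.card F := by
  have hsplit : ∀ j k : F, ψ (k * t - k * k / j * t) = ψ (k * t) * ψ (-(k * k * t) * j⁻¹) := by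
    intro j k
    rw [← AddChar.map_add_eq_mul]
    ring_nf
  simp_rw [hsplit]
  rw [sum_comm]
  simp_rw [← mul_sum, AddChar.sum_erase_zero_mul_inv hψ, neg_eq_zero, mul_eq_zero, or_self]
  split_ifs with ht
  · simp only [ht, mul_zero, AddChar.map_zero_eq_one, or_true, if_true, one_mul,
      sum_sub_distrib, sum_const, card_univ, nsmul_eq_mul, mul_one]
    ring
  · simp_rw [ht, or_false, mul_sub, mul_one, sum_sub_distrib, mul_ite, mul_zero, sum_ite_eq',
      mem_univ, if_true, AddChar.sum_mul_eq_ite hψ, if_neg ht]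
    simp

variable (Q : QuadraticForm F V)

omit [Fintype F] [DecidableEq F] in
theorem QuadraticMap.sum_addChar_mul_add_polar {j : F} (hj : j ≠ 0) (k : F) (g : V) :
    ∑ y, ψ (j * Q y + k * polar Q y g) = ψ (-(k * k / j * Q g)) * ∑ y, ψ (j * Q y) := by
  have hshift : ∀ y, ψ (j * Q y + k * polar Q y g)
      = ψ (-(k * k / j * Q g)) * ψ (j * Q (y + (k / j) • g)) := by
    intro y
    rw [← AddChar.map_add_eq_mul, map_add_smul]
    congr 1
    field_simp
    ring
  simp_rw [hshift, ← mul_sum]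
  congr 1
  exact Fintype.sum_equiv (Equiv.addRight ((k / j) • g)) _ _ fun _ => rfl

omit [Fintype F] in
theorem QuadraticMap.sum_addChar_mul_polar (hψ : ψ.IsPrimitive)
    (hQ : (polarBilin Q).SeparatingRight) {k : F} (hk : k ≠ 0) {g : V} (hg : g ≠ 0) :
    ∑ y, ψ (k * polar Q y g) = 0 := by
  refine AddChar.sum_comp_linearMap_eq_zero (L := k • (polarBilin Q).flip g) hψ ?_
  intro h
  refine hg (hQ g fun y => ?_)
  simpa [hk] using LinearMap.congr_fun h y

variable {Q} (hψ : ψ.IsPrimitive) {q : ℂ} (hG : ∀ j ≠ 0, ∑ y, ψ (j * Q y) = -q)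
include hψ hG

theorem QuadraticMap.card_isotropic_mul :
    (#{y | Q y = 0} : ℂ) * Fintype.card F = Fintype.card V - (Fintype.card F - 1) * q := by
  rw [AddChar.card_filter_eq_zero_mul hψ, sum_comm, ← add_sum_erase _ _ (mem_univ (0 : F)),
    sum_congr rfl fun j hj => hG j (ne_of_mem_erase hj)]
  simp only [zero_mul, AddChar.map_zero_eq_one, sum_const, card_univ, nsmul_eq_mul, mul_one,
    mem_univ, card_erase_of_mem, Nat.cast_sub Fintype.card_pos, Nat.cast_one]
  ring

theorem QuadraticMap.card_isotropic_inter_translate_mul (hQ : (polarBilin Q).SeparatingRight)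
    {g : V} (hg : g ≠ 0) :
    (#{y | Q y = 0 ∧ Q (y + g) = 0} : ℂ) * Fintype.card F ^ 2
      = Fintype.card V
        - q * if Q g = 0 then ((Fintype.card F : ℂ) - 1) * Fintype.card F
          else (Fintype.card F : ℂ) := by
  have hset : univ.filter (fun y => Q y = 0 ∧ Q (y + g) = 0)
      = univ.filter fun y => Q y = 0 ∧ polar Q y g + Q g = 0 := by
    refine filter_congr fun y _ => and_congr_right fun hy => ?_
    rw [polar, hy]
    ring_nf
  have hterm : ∀ j k : F, ∑ y, ψ (j * Q y + k * (polar Q y g + Q g))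
      = ψ (k * Q g) * ∑ y, ψ (j * Q y + k * polar Q y g) := by
    intro j k
    rw [mul_sum]
    refine sum_congr rfl fun y _ => ?_
    rw [← AddChar.map_add_eq_mul]
    ring_nf
  have hrow0 : ∑ k, ψ (k * Q g) * ∑ y, ψ (0 * Q y + k * polar Q y g) = Fintype.card V := by
    have hk : ∀ k ∈ univ.erase (0 : F), ψ (k * Q g) * ∑ y, ψ (k * polar Q y g) = 0 :=
      fun k hk => by rw [sum_addChar_mul_polar Q hψ hQ (ne_of_mem_erase hk) hg, mul_zero]
    simp only [zero_mul, zero_add]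
    rw [← add_sum_erase _ _ (mem_univ (0 : F)), sum_eq_zero hk]
    simp
  have hrow : ∀ j ∈ univ.erase (0 : F), ∑ k, ψ (k * Q g) * ∑ y, ψ (j * Q y + k * polar Q y g)
      = -q * ∑ k, ψ (k * Q g - k * k / j * Q g) := by
    intro j hj
    rw [mul_sum]
    refine sum_congr rfl fun k _ => ?_
    rw [sum_addChar_mul_add_polar Q (ne_of_mem_erase hj), hG j (ne_of_mem_erase hj),
      sub_eq_add_neg, AddChar.map_add_eq_mul]
    ring
  rw [hset, AddChar.card_filter_and_eq_zero_mul hψ, sum_comm]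
  simp_rw [sum_comm (s := (univ : Finset V)), hterm]
  rw [← add_sum_erase _ _ (mem_univ (0 : F)), hrow0, sum_congr rfl hrow, ← mul_sum,
    AddChar.sum_erase_zero_sum_mul_sub hψ]
  split_ifs <;> ring

end Characters

theorem QuadraticMap.isPDS_isotropic {F : Type*} [Field F] [Fintype F] [DecidableEq F]
    {V : Type} [AddCommGroup V] [Module F V] [Fintype V] [DecidableEq V] {ψ : AddChar F ℂ}
    {Q : QuadraticForm F V} (hψ : ψ.IsPrimitive) (hQ : (polarBilin Q).SeparatingRight)
    {r m : ℕ} (hr : Fintype.card F = r) (hm : 0 < m) (hV : Fintype.card V = r ^ (2 * m))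
    (hG : ∀ j ≠ 0, ∑ y, ψ (j * Q y) = -(r ^ m : ℂ)) :
    IsPDS (univ.filter fun x => x ≠ 0 ∧ Q x = 0) (r ^ (2 * m))
      (r ^ (2 * m - 1) - r ^ (m - 1) * (r - 1) - 1)
      (r ^ (2 * m - 2) - r ^ (m - 1) * (r - 1) - 2) (r ^ (2 * m - 2) - r ^ (m - 1)) := by
  obtain ⟨n, rfl⟩ : ∃ n, m = n + 1 := ⟨m - 1, by omega⟩
  rw [show 2 * (n + 1) - 1 = 2 * n + 1 by omega, show 2 * (n + 1) - 2 = 2 * n by omega,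
    Nat.add_sub_cancel]
  have hr1 : 1 ≤ r := hr ▸ Fintype.card_pos
  have hzeros : #(univ.filter fun y => Q y = 0) + r ^ n * (r - 1) = r ^ (2 * n + 1) := by
    refine Nat.add_eq_of_cast_mul_eq (c := r) (by omega) ?_
    have := card_isotropic_mul hψ hG
    rw [hV, hr] at this
    push_cast [Nat.cast_sub hr1] at this ⊢
    linear_combination this
  refine ⟨hV, ?_, fun g hg => ?_⟩
  · have hD : (univ.filter fun x => x ≠ 0 ∧ Q x = 0) = (univ.filter fun y => Q y = 0).erase 0 := by
      ext
      simp
    rw [hD, card_erase_of_mem (by simp)]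
    omega
  have hpairs := card_filter_sub_eq_add_ite (fun y => Q y = 0) (map_zero Q)
    (fun x => by rw [QuadraticMap.map_neg]) hg
  have hinter := card_isotropic_inter_translate_mul hψ hG hQ hg
  rw [hV, hr] at hinter
  have hgD : g ∈ univ.filter (fun x => x ≠ 0 ∧ Q x = 0) ↔ Q g = 0 := by simp [hg]
  by_cases hQg : Q g = 0
  · rw [if_pos (hgD.mpr hQg)]
    rw [if_pos hQg] at hpairs hinter
    have : #(univ.filter fun y => Q y = 0 ∧ Q (y + g) = 0) + r ^ n * (r - 1) = r ^ (2 * n) := by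
      refine Nat.add_eq_of_cast_mul_eq (c := r ^ 2) (by positivity) ?_
      push_cast [Nat.cast_sub hr1] at hinter ⊢
      linear_combination hinter
    omega
  · rw [if_neg (hQg ∘ hgD.mp)]
    rw [if_neg hQg] at hpairs hinter
    have : #(univ.filter fun y => Q y = 0 ∧ Q (y + g) = 0) + r ^ n = r ^ (2 * n) := by
      refine Nat.add_eq_of_cast_mul_eq (c := r ^ 2) (by positivity) ?_
      push_cast at hinter ⊢
      linear_combination hinter
    omega

section NormTrace

variable {p : ℕ} {K : Type} [Field K] [Fintype K]

section Frobenius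

variable [Fact p.Prime] [Algebra (ZMod p) K]

theorem FiniteField.frobeniusAlgEquivOfAlgebraic_pow_apply (m : ℕ) (x : K) :
    (FiniteField.frobeniusAlgEquivOfAlgebraic (ZMod p) K ^ m) x = x ^ p ^ m := by
  rw [AlgEquiv.coe_pow, FiniteField.coe_frobeniusAlgEquivOfAlgebraic_iterate, ZMod.card]

theorem Algebra.trace_pow_prime_pow (m : ℕ) (x : K) :
    Algebra.trace (ZMod p) K (x ^ p ^ m) = Algebra.trace (ZMod p) K x := by
  rw [← FiniteField.frobeniusAlgEquivOfAlgebraic_pow_apply, Algebra.trace_eq_of_algEquiv]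

variable (p K) in
noncomputable def normTraceForm (m : ℕ) : QuadraticForm (ZMod p) K :=
  LinearMap.BilinMap.toQuadraticMap <| (Algebra.traceForm (ZMod p) K).compl₁₂
    (FiniteField.frobeniusAlgEquivOfAlgebraic (ZMod p) K ^ m).toLinearMap LinearMap.id

theorem normTraceForm_apply (m : ℕ) (x : K) :
    normTraceForm p K m x = Algebra.trace (ZMod p) K (x ^ (p ^ m + 1)) := by
  simp only [normTraceForm, LinearMap.BilinMap.toQuadraticMap_apply, LinearMap.compl₁₂_apply,
    Algebra.traceForm_apply, AlgEquiv.toLinearMap_apply,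
    FiniteField.frobeniusAlgEquivOfAlgebraic_pow_apply, LinearMap.id_apply, pow_succ]

end Frobenius

variable {m : ℕ} (hK : Fintype.card K = p ^ (2 * m))
include hK

theorem pow_pow_prime_pow_self (x : K) : (x ^ p ^ m) ^ p ^ m = x := by
  rw [← pow_mul, ← pow_add, ← two_mul, ← hK, FiniteField.pow_card]

theorem pow_prime_pow_add_one_fixed (x : K) :
    (x ^ (p ^ m + 1)) ^ p ^ m = x ^ (p ^ m + 1) := by
  rw [← pow_mul, mul_comm, pow_mul, pow_succ, pow_pow_prime_pow_self hK, ← pow_succ']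

theorem sum_comp_pow_prime_pow_add_one [Fact p.Prime] [DecidableEq K] {M : Type*} [AddCommGroup M]
    (f : K → M) :
    ∑ y, f (y ^ (p ^ m + 1)) = (p ^ m + 1) • ∑ u with u ^ p ^ m = u, f u - p ^ m • f 0 := by
  have hunits : Fintype.card Kˣ = (p ^ m + 1) * (p ^ m - 1) := by
    rw [Fintype.card_units, hK, pow_mul', sq, mul_self_tsub_one]
  have hq0 : p ^ m ≠ 0 := pow_ne_zero _ (Fact.out : p.Prime).ne_zero
  have hfixed : ∀ u : Kˣ, u ^ (p ^ m - 1) = 1 ↔ (u : K) ^ p ^ m = u := by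
    intro u
    rw [← Units.val_pow_eq_pow_val, Units.val_inj]
    conv_rhs => rw [← pow_sub_one_mul hq0 u]
    exact mul_eq_right.symm
  calc ∑ y, f (y ^ (p ^ m + 1))
      = f 0 + ∑ u : Kˣ, f ↑(u ^ (p ^ m + 1)) := by
        rw [Fintype.sum_eq_add_sum_units]
        simp [Units.val_pow_eq_pow_val]
    _ = f 0 + (p ^ m + 1) • ∑ u : Kˣ with u ^ (p ^ m - 1) = 1, f u := by
        rw [IsCyclic.sum_comp_pow hunits (fun u : Kˣ => f u)]
    _ = f 0 + (p ^ m + 1) • (∑ u with u ^ p ^ m = u, f u - f 0) := by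
        rw [sum_filter, sum_filter,
          Fintype.sum_eq_add_sum_units (fun y => if y ^ p ^ m = y then f y else 0)]
        simp [hfixed, zero_pow hq0]
    _ = (p ^ m + 1) • ∑ u with u ^ p ^ m = u, f u - p ^ m • f 0 := by
        rw [smul_sub, add_smul, add_smul, one_smul, one_smul]
        abel

variable [Fact p.Prime] [Algebra (ZMod p) K]

theorem polar_normTraceForm (y g : K) :
    QuadraticMap.polar (normTraceForm p K m) y g
      = 2 * Algebra.trace (ZMod p) K (g ^ p ^ m * y) := by
  have hswap : Algebra.trace (ZMod p) K (y ^ p ^ m * g)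
      = Algebra.trace (ZMod p) K (g ^ p ^ m * y) := by
    rw [← Algebra.trace_pow_prime_pow m, mul_pow, pow_pow_prime_pow_self hK, mul_comm]
  simp only [normTraceForm, LinearMap.BilinMap.polar_toQuadraticMap, LinearMap.compl₁₂_apply,
    Algebra.traceForm_apply, AlgEquiv.toLinearMap_apply,
    FiniteField.frobeniusAlgEquivOfAlgebraic_pow_apply, LinearMap.id_apply, hswap]
  ring

theorem separatingRight_polarBilin_normTraceForm (hp : p ≠ 2) :
    (QuadraticMap.polarBilin (normTraceForm p K m)).SeparatingRight := by
  intro g hg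
  by_contra hg0
  obtain ⟨y, hy⟩ : ∃ y, Algebra.trace (ZMod p) K (g ^ p ^ m * y) ≠ 0 := by
    by_contra! h
    exact pow_ne_zero _ hg0 ((traceForm_nondegenerate (ZMod p) K).1 _ (by simpa using h))
  have h2 : (2 : ZMod p) ≠ 0 := Ring.two_ne_zero (by rwa [ZMod.ringChar_zmod_n])
  have := hg y
  rw [QuadraticMap.polarBilin_apply_apply, polar_normTraceForm hK] at this
  exact mul_ne_zero h2 hy this

theorem exists_pow_prime_pow_eq_self_trace_ne_zero (hp : p ≠ 2) :
    ∃ u : K, u ^ p ^ m = u ∧ Algebra.trace (ZMod p) K u ≠ 0 := by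
  have : CharP K p := (Algebra.charP_iff (ZMod p) K p).mp inferInstance
  obtain ⟨z, hz⟩ : ∃ z : K, Algebra.trace (ZMod p) K z ≠ 0 := by
    by_contra! h
    exact one_ne_zero ((traceForm_nondegenerate (ZMod p) K).1 1 (by simpa using h))
  refine ⟨z + z ^ p ^ m, ?_, ?_⟩
  · rw [add_pow_char_pow, pow_pow_prime_pow_self hK, add_comm]
  · rw [map_add, Algebra.trace_pow_prime_pow, ← two_mul]
    exact mul_ne_zero (Ring.two_ne_zero (by rwa [ZMod.ringChar_zmod_n])) hz

theorem sum_addChar_trace_of_pow_prime_pow_eq_self [DecidableEq K] (hp : p ≠ 2)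
    {ψ : AddChar (ZMod p) ℂ} (hψ : ψ.IsPrimitive) {j : ZMod p} (hj : j ≠ 0) :
    ∑ u with u ^ p ^ m = u, ψ (j * Algebra.trace (ZMod p) K u) = 0 := by
  classical
  let H : Submodule (ZMod p) K := LinearMap.eqLocus
    (FiniteField.frobeniusAlgEquivOfAlgebraic (ZMod p) K ^ m).toLinearMap LinearMap.id
  have hmem : ∀ u, u ∈ H ↔ u ^ p ^ m = u := fun u => by
    simp [H, LinearMap.mem_eqLocus, FiniteField.frobeniusAlgEquivOfAlgebraic_pow_apply]
  rw [sum_subtype (p := (· ∈ H)) _ (fun u => by simp [hmem])]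
  refine AddChar.sum_comp_linearMap_eq_zero hψ (L := j • (Algebra.trace (ZMod p) K ∘ₗ H.subtype)) ?_
  obtain ⟨u, hu, htr⟩ := exists_pow_prime_pow_eq_self_trace_ne_zero hK hp
  intro hL
  have := LinearMap.congr_fun hL ⟨u, (hmem u).mpr hu⟩
  simp [hj, htr] at this

theorem sum_addChar_normTraceForm (hp : p ≠ 2) {ψ : AddChar (ZMod p) ℂ} (hψ : ψ.IsPrimitive)
    {j : ZMod p} (hj : j ≠ 0) : ∑ y, ψ (j * normTraceForm p K m y) = -(p ^ m : ℂ) := by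
  classical
  simp_rw [normTraceForm_apply]
  rw [sum_comp_pow_prime_pow_add_one hK (fun u => ψ (j * Algebra.trace (ZMod p) K u)),
    sum_addChar_trace_of_pow_prime_pow_eq_self hK hp hψ hj]
  simp

theorem finrank_zmod_eq_two_mul : Module.finrank (ZMod p) K = 2 * m := by
  have h := Module.card_eq_pow_finrank (K := ZMod p) (V := K)
  rw [hK, ZMod.card] at h
  exact (Nat.pow_right_injective (Fact.out : p.Prime).two_le h).symm

theorem algebraMap_normTraceForm (x : K) :
    algebraMap (ZMod p) K (normTraceForm p K m x) = 2 * fieldTr p m (x ^ (p ^ m + 1)) := by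
  rw [normTraceForm_apply, FiniteField.algebraMap_trace_eq_sum_pow, finrank_zmod_eq_two_mul hK,
    Nat.card_zmod, two_mul, sum_range_add, two_mul, fieldTr]
  congr 1
  refine sum_congr rfl fun i _ => ?_
  rw [pow_add p m i, pow_mul, pow_prime_pow_add_one_fixed hK]

theorem fieldTr_pow_eq_zero_iff (hp : p ≠ 2) (x : K) :
    fieldTr p m (x ^ (p ^ m + 1)) = 0 ↔ normTraceForm p K m x = 0 := by
  have : CharP K p := (Algebra.charP_iff (ZMod p) K p).mp inferInstance
  have h2 : (2 : K) ≠ 0 := Ring.two_ne_zero (by rwa [ringChar.eq K p])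
  rw [← map_eq_zero (algebraMap (ZMod p) K), algebraMap_normTraceForm hK, mul_eq_zero,
    or_iff_right h2]

end NormTrace

theorem denniston_stmt6_general (p m : ℕ) (hp : p.Prime) (hodd : Odd p)
    (K : Type) [Field K] [Fintype K] [DecidableEq K]
    (hK : Fintype.card K = p ^ (2 * m)) :
    IsPDS (Finset.univ.filter
        (fun x : K => x ≠ 0 ∧ fieldTr p m (x ^ (p ^ m + 1)) = 0))
      (p ^ (2 * m))
      (p ^ (2 * m - 1) - p ^ (m - 1) * (p - 1) - 1)
      (p ^ (2 * m - 2) - p ^ (m - 1) * (p - 1) - 2)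
      (p ^ (2 * m - 2) - p ^ (m - 1)) := by
  have : Fact p.Prime := ⟨hp⟩
  have : CharP K p := charP_of_card_eq_prime_pow hK
  let := ZMod.algebra K p
  have hp2 : p ≠ 2 := by
    rintro rfl
    exact Nat.not_odd_iff_even.mpr even_two hodd
  have hm : 0 < m := by
    refine Nat.pos_of_ne_zero fun hm => ?_
    rw [hm, mul_zero, pow_zero] at hK
    exact Fintype.one_lt_card.ne' hK
  rw [filter_congr fun x _ => and_congr_right' (fieldTr_pow_eq_zero_iff hK hp2 x)]
  exact QuadraticMap.isPDS_isotropic (ZMod.isPrimitive_stdAddChar p)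
    (separatingRight_polarBilin_normTraceForm hK hp2) (ZMod.card p) hm hK
    fun j hj => sum_addChar_normTraceForm hK hp2 (ZMod.isPrimitive_stdAddChar p) hj

/-- For p an odd prime and m ≥ 2, the set
X = {x ∈ GF(p^{2m}) \ {0} : Tr_{m/1}(x^(p^m+1)) = 0} is a
(p^{2m}, p^{2m-1} − p^{m-1}(p−1) − 1, p^{2m-2} − p^{m-1}(p−1) − 2, p^{2m-2} − p^{m-1})
partial difference set in the additive group of GF(p^{2m}). -/
theorem denniston_stmt6 (p m : ℕ) (hp : p.Prime) (hodd : Odd p) (hm : 2 ≤ m)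
    (K : Type) [Field K] [Fintype K] [DecidableEq K]
    (hK : Fintype.card K = p ^ (2 * m)) :
    IsPDS (Finset.univ.filter
        (fun x : K => x ≠ 0 ∧ fieldTr p m (x ^ (p ^ m + 1)) = 0))
      (p ^ (2 * m))
      (p ^ (2 * m - 1) - p ^ (m - 1) * (p - 1) - 1)
      (p ^ (2 * m - 2) - p ^ (m - 1) * (p - 1) - 2)
      (p ^ (2 * m - 2) - p ^ (m - 1)) :=
  denniston_stmt6_general p m hp hodd K hK
end

section
/- Let p be a prime and m ≥ 2, and set e = (p^m − 1)/(p − 1). Let ω be a primitive element of GF(p^m). Then the set D = {i : 0 ≤ i ≤ e−1, Tr(ω^i) = 0} is an (e, (p^{m-1}−1)/(p−1), (p^{m-2}−1)/(p−1)) difference set in the cyclic group (Z_e, +): every nonzero element of Z_e is expressible as a difference i − j (mod e) with i, j ∈ D in exactly (p^{m-2}−1)/(p−1) ways. -/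
/-- D is a (v,k,λ) difference set in the finite abelian group G. -/
def IsDiffSet {G : Type} [AddCommGroup G] [Fintype G] [DecidableEq G]
    (D : Finset G) (v k l : ℕ) : Prop :=
  Fintype.card G = v ∧ D.card = k ∧
    ∀ g : G, g ≠ 0 → ((D ×ˢ D).filter (fun q => q.1 - q.2 = g)).card = l

/-!
Multiplication by the scalars `𝔽_p^* = ⟨ω^e⟩` preserves the vanishing of the trace, so a set of
nonzero elements of `F` cut out by trace conditions has `p - 1` times as many elements as its set
of exponents `i : ZMod e`. For `D` the set is the kernel of the trace, with `p^(m-1)` elements.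
Since `i - j = g` means `ω^i = ω^g ω^j` up to a scalar, the pairs with difference `g` correspond to
the kernel of `x ↦ (Tr x, Tr (ω^g x))`; for `g ≠ 0`, `ω^g ∉ 𝔽_p`, and nondegeneracy of the trace
form makes this map onto `𝔽_p²`, so its kernel has `p^(m-2)` elements.
-/

open Finset Function

theorem card_filter_eq_zero_mul_card_of_surjective {G H F' : Type*} [AddGroup G] [Fintype G]
    [AddMonoid H] [Fintype H] [DecidableEq H] [FunLike F' G H] [AddMonoidHomClass F' G H]
    (f : F') (hf : Surjective f) : #{x | f x = 0} * Fintype.card H = Fintype.card G := by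
  calc #{x | f x = 0} * Fintype.card H = ∑ y : H, #{x | f x = y} := by
        rw [mul_comm, ← smul_eq_mul, ← card_univ, ← sum_const]
        exact sum_congr rfl fun y _ =>
          AddMonoidHom.card_fiber_eq_of_mem_range f ⟨0, map_zero f⟩ (hf y)
    _ = Fintype.card G := (card_eq_sum_card_fiberwise fun _ _ => mem_univ _).symm

theorem card_filter_sub_eq_card_filter_add_mem {G : Type*} [AddCommGroup G] [DecidableEq G]
    (D : Finset G) (g : G) : #{q ∈ D ×ˢ D | q.1 - q.2 = g} = #{j ∈ D | j + g ∈ D} := by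
  refine card_nbij' Prod.snd (fun j => (j + g, j)) ?_ ?_ ?_ ?_
  · rintro ⟨a, b⟩ h
    simp only [coe_filter, mem_product, Set.mem_ofPred_eq] at h ⊢
    obtain ⟨⟨ha, hb⟩, rfl⟩ := h
    simpa using And.intro hb ha
  · intro j h
    simp only [coe_filter, mem_product, Set.mem_ofPred_eq] at h ⊢
    simp [h.1, h.2]
  · rintro ⟨a, b⟩ h
    simp only [coe_filter, Set.mem_ofPred_eq] at h
    simp [← h.2]
  · intro j _
    rfl

section TraceForm
variable (K : Type*) {L : Type*} [Field K] [Field L] [Algebra K L] [FiniteDimensional K L]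
  [Algebra.IsSeparable K L]

theorem exists_trace_eq_zero_and_trace_mul_ne_zero {l : L}
    (hl : l ∉ Set.range (algebraMap K L)) :
    ∃ y, Algebra.trace K L y = 0 ∧ Algebra.trace K L (l * y) ≠ 0 := by
  by_contra! h
  obtain ⟨x₀, hx₀⟩ := Algebra.trace_surjective K L 1
  set c := Algebra.trace K L (l * x₀)
  -- `x - Tr(x) x₀` lies in the kernel of the trace, so `Tr(l x) = c Tr(x)` for every `x`.
  have hlin : ∀ x, Algebra.trace K L ((l - algebraMap K L c) * x) = 0 := by
    intro x
    have hker := h (x - Algebra.trace K L x • x₀) (by simp [hx₀])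
    simp only [mul_sub, mul_smul_comm, map_sub, map_smul, smul_eq_mul] at hker
    simp only [sub_mul, map_sub, ← Algebra.smul_def, map_smul, smul_eq_mul]
    linear_combination hker
  have hlc := (traceForm_nondegenerate K L).1 _ hlin
  exact hl ⟨c, (sub_eq_zero.mp hlc).symm⟩

theorem trace_prod_trace_mulLeft_surjective {l : L} (hl : l ∉ Set.range (algebraMap K L)) :
    Surjective ((Algebra.trace K L).prod ((Algebra.trace K L).comp (LinearMap.mulLeft K l))) := by
  obtain ⟨x₀, hx₀⟩ := Algebra.trace_surjective K L 1
  obtain ⟨y, hy, hly⟩ := exists_trace_eq_zero_and_trace_mul_ne_zero K hl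
  rintro ⟨s, t⟩
  refine ⟨s • x₀ + ((t - s * Algebra.trace K L (l * x₀)) / Algebra.trace K L (l * y)) • y, ?_⟩
  ext
  · simp [hx₀, hy]
  · simp [mul_add, hly]

variable [Fintype K] [DecidableEq K] [Fintype L]

theorem card_trace_eq_zero_mul_card :
    #{x : L | Algebra.trace K L x = 0} * Fintype.card K = Fintype.card L :=
  card_filter_eq_zero_mul_card_of_surjective _ (Algebra.trace_surjective K L)

theorem card_trace_eq_zero_and_trace_mul_eq_zero_mul_card {l : L}
    (hl : l ∉ Set.range (algebraMap K L)) :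
    #{x : L | Algebra.trace K L x = 0 ∧ Algebra.trace K L (l * x) = 0} * Fintype.card K ^ 2 =
      Fintype.card L := by
  rw [sq, ← Fintype.card_prod,
    ← card_filter_eq_zero_mul_card_of_surjective _ (trace_prod_trace_mulLeft_surjective K hl)]
  simp [Prod.ext_iff]

end TraceForm

theorem Nat.count_mul_of_periodic {Q : ℕ → Prop} [DecidablePred Q] {e : ℕ} (hQ : Periodic Q e)
    (k : ℕ) : Nat.count Q (e * k) = k * Nat.count Q e := by
  induction k with
  | zero => simp
  | succ k ih =>
    have hshift : (fun j => Q (e * k + j)) = Q := funext fun j => by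
      rw [add_comm, mul_comm]
      exact hQ.nat_mul k j
    rw [mul_add_one, Nat.count_add, ih, add_one_mul]
    simp only [hshift]

theorem ZMod.card_filter_val_eq_count {e : ℕ} [NeZero e] (Q : ℕ → Prop) [DecidablePred Q] :
    #{i : ZMod e | Q i.val} = Nat.count Q e := by
  rw [Nat.count_eq_card_filter_range]
  refine card_nbij' ZMod.val (fun n => (n : ZMod e)) ?_ ?_ ?_ ?_ <;> intro i <;>
    simp +contextual [ZMod.val_lt, ZMod.val_natCast, Nat.mod_eq_of_lt]

section PowersOfGenerator
variable {G₀ : Type*} [GroupWithZero G₀] {ω : G₀}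

theorem ne_zero_of_orderOf_ne_zero (h : orderOf ω ≠ 0) : ω ≠ 0 := by
  rintro rfl
  exact h (orderOf_zero G₀)

theorem pow_eq_self_iff_pow_sub_one_eq_one {c : G₀} (hc : c ≠ 0) {n : ℕ} (hn : n ≠ 0) :
    c ^ n = c ↔ c ^ (n - 1) = 1 := by
  conv_lhs => rw [← Nat.sub_add_cancel (Nat.one_le_iff_ne_zero.mpr hn), pow_succ]
  exact mul_eq_right₀ hc

theorem pow_pow_eq_self_iff_dvd {e p : ℕ} [NeZero e] (hp : 2 ≤ p)
    (hord : orderOf ω = e * (p - 1)) (k : ℕ) : (ω ^ k) ^ p = ω ^ k ↔ e ∣ k := by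
  have hω0 := ne_zero_of_orderOf_ne_zero (hord ▸ Nat.mul_ne_zero (NeZero.ne e) (by omega))
  rw [pow_eq_self_iff_pow_sub_one_eq_one (pow_ne_zero k hω0) (by omega), ← pow_mul,
    ← orderOf_dvd_iff_pow_eq_one, hord, Nat.mul_dvd_mul_iff_right (by omega)]

variable [Fintype G₀] [DecidableEq G₀]

theorem card_filter_ne_zero_eq_count (hω : ∀ x : G₀, x ≠ 0 → ∃ n : ℕ, x = ω ^ n)
    (hpos : 0 < orderOf ω) (P : G₀ → Prop) [DecidablePred P] :
    #{x | x ≠ 0 ∧ P x} = Nat.count (fun n => P (ω ^ n)) (orderOf ω) := by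
  have hω0 := ne_zero_of_orderOf_ne_zero hpos.ne'
  rw [Nat.count_eq_card_filter_range]
  symm
  refine card_nbij (ω ^ ·) ?_ (pow_injOn_Iio_orderOf.mono ?_) ?_
  · intro n hn
    simp_all
  · intro n hn
    simp_all
  · intro x hx
    simp only [coe_filter, mem_univ, true_and, Set.mem_ofPred_eq] at hx
    obtain ⟨n, rfl⟩ := hω x hx.1
    refine ⟨n % orderOf ω, ?_, pow_mod_orderOf ω n⟩
    simpa [Nat.mod_lt _ hpos, pow_mod_orderOf] using hx.2

theorem card_filter_eq_mul_card_add_one (hω : ∀ x : G₀, x ≠ 0 → ∃ n : ℕ, x = ω ^ n)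
    {e k : ℕ} [NeZero e] (hk : 0 < k) (hord : orderOf ω = e * k) (P : G₀ → Prop)
    [DecidablePred P] (hP0 : P 0) (hP : Periodic (fun n => P (ω ^ n)) e) :
    #{x | P x} = k * #{i : ZMod e | P (ω ^ i.val)} + 1 := by
  have hsplit : #{x | P x} = #{x | x ≠ 0 ∧ P x} + 1 := by
    rw [← card_erase_add_one (s := {x | P x}) (a := 0) (by simpa using hP0)]
    congr 2
    ext x
    simp [and_comm]
  rw [hsplit, card_filter_ne_zero_eq_count hω (hord ▸ Nat.mul_pos (NeZero.pos e) hk), hord,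
    Nat.count_mul_of_periodic hP, ← ZMod.card_filter_val_eq_count (fun n => P (ω ^ n))]

end PowersOfGenerator

theorem orderOf_eq_card_sub_one {F : Type*} [Field F] [Fintype F] {ω : F}
    (hω : ∀ x : F, x ≠ 0 → ∃ n : ℕ, x = ω ^ n) (hcard : 2 < Fintype.card F) :
    orderOf ω = Fintype.card F - 1 := by
  classical
  obtain ⟨x, -, hx⟩ := exists_mem_notMem_of_card_lt_card (s := {0, 1}) (t := univ)
    ((card_le_two.trans_lt hcard).trans_eq card_univ.symm)
  simp only [mem_insert, mem_singleton, not_or] at hx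
  have hω0 : ω ≠ 0 := by
    rintro rfl
    obtain ⟨n, rfl⟩ := hω x hx.1
    rcases n with _ | n <;> simp_all
  let u : Fˣ := Units.mk0 ω hω0
  have hgen : ∀ v : Fˣ, v ∈ Subgroup.zpowers u := fun v => by
    obtain ⟨n, hn⟩ := hω v v.ne_zero
    exact ⟨n, Units.ext (by simp [u, hn])⟩
  rw [show ω = (u : F) from rfl, orderOf_units, orderOf_eq_card_of_forall_mem_zpowers hgen,
    Nat.card_eq_fintype_card, Fintype.card_units]

section FieldTr
variable {p m : ℕ} {F : Type} [Field F]

theorem fieldTr_zero (hp : p ≠ 0) : fieldTr p m (0 : F) = 0 := by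
  simp [fieldTr, hp]

theorem fieldTr_mul_of_pow_eq_self_s10 {c : F} (hc : c ^ p = c) (x : F) :
    fieldTr p m (c * x) = c * fieldTr p m x := by
  have hpow : ∀ i, c ^ p ^ i = c := fun i => by
    induction i with
    | zero => exact pow_one c
    | succ i ih => rw [pow_succ, pow_mul, ih, hc]
  simp only [fieldTr, mul_pow, hpow, mul_sum]

variable [Fintype F] [Fact p.Prime] [Algebra (ZMod p) F]

theorem algebraMap_trace_eq_fieldTr (hF : Fintype.card F = p ^ m) (x : F) :
    algebraMap (ZMod p) F (Algebra.trace (ZMod p) F x) = fieldTr p m x := by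
  have hrank : Module.finrank (ZMod p) F = m := by
    refine Nat.pow_right_injective (Fact.out : p.Prime).two_le ?_
    change p ^ _ = p ^ m
    rw [← hF, Module.card_eq_pow_finrank (K := ZMod p), ZMod.card]
  rw [FiniteField.algebraMap_trace_eq_sum_pow, hrank, Nat.card_zmod]
  rfl

theorem fieldTr_eq_zero_iff (hF : Fintype.card F = p ^ m) (x : F) :
    fieldTr p m x = 0 ↔ Algebra.trace (ZMod p) F x = 0 := by
  rw [← algebraMap_trace_eq_fieldTr hF, FaithfulSMul.algebraMap_eq_zero_iff]

theorem card_fieldTr_eq_zero [DecidableEq F] (hF : Fintype.card F = p ^ m) (hm : 1 ≤ m) :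
    #{x : F | fieldTr p m x = 0} = p ^ (m - 1) := by
  have h := card_trace_eq_zero_mul_card (ZMod p) (L := F)
  rw [ZMod.card, hF, ← Nat.sub_add_cancel hm, pow_succ] at h
  rw [← Nat.eq_of_mul_eq_mul_right (Fact.out : p.Prime).pos h]
  congr 1
  ext x
  simp [fieldTr_eq_zero_iff hF]

theorem card_fieldTr_eq_zero_and_fieldTr_mul_eq_zero [DecidableEq F]
    (hF : Fintype.card F = p ^ m) (hm : 2 ≤ m) {l : F} (hl : l ^ p ≠ l) :
    #{x : F | fieldTr p m x = 0 ∧ fieldTr p m (l * x) = 0} = p ^ (m - 2) := by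
  have hl' : l ∉ Set.range (algebraMap (ZMod p) F) := by
    rintro ⟨a, rfl⟩
    exact hl (by rw [← map_pow, ZMod.pow_card])
  have h := card_trace_eq_zero_and_trace_mul_eq_zero_mul_card (ZMod p) hl'
  rw [ZMod.card, hF, ← Nat.sub_add_cancel hm, pow_add] at h
  rw [← Nat.eq_of_mul_eq_mul_right (pow_pos (Fact.out : p.Prime).pos 2) h]
  congr 1
  ext x
  simp [fieldTr_eq_zero_iff hF]

end FieldTr

section Exponents
variable {p m e : ℕ} [NeZero e] {F : Type} [Field F] {ω : F}

theorem fieldTr_mul_pow_add_eq_zero_iff (hp : 2 ≤ p) (hord : orderOf ω = e * (p - 1)) (a : F)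
    (n : ℕ) : fieldTr p m (a * ω ^ (n + e)) = 0 ↔ fieldTr p m (a * ω ^ n) = 0 := by
  have hω0 := ne_zero_of_orderOf_ne_zero (hord ▸ Nat.mul_ne_zero (NeZero.ne e) (by omega))
  have hfix := (pow_pow_eq_self_iff_dvd hp hord e).mpr dvd_rfl
  rw [pow_add, mul_comm (ω ^ n), ← mul_assoc, mul_comm a, mul_assoc,
    fieldTr_mul_of_pow_eq_self_s10 hfix, mul_eq_zero_iff_left (pow_ne_zero e hω0)]

theorem periodic_fieldTr_pow_eq_zero (hp : 2 ≤ p) (hord : orderOf ω = e * (p - 1)) :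
    Periodic (fun n => fieldTr p m (ω ^ n) = 0) e := fun n =>
  propext (by simpa using fieldTr_mul_pow_add_eq_zero_iff hp hord 1 n)

theorem fieldTr_pow_val_add_eq_zero_iff (hp : 2 ≤ p) (hord : orderOf ω = e * (p - 1))
    (j g : ZMod e) :
    fieldTr p m (ω ^ (j + g).val) = 0 ↔ fieldTr p m (ω ^ g.val * ω ^ j.val) = 0 := by
  rw [ZMod.val_add, ← pow_add, add_comm]
  exact ((periodic_fieldTr_pow_eq_zero hp hord).map_mod_nat _).to_iff

variable [Fintype F] [DecidableEq F] [Fact p.Prime] [Algebra (ZMod p) F]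

theorem sub_one_mul_card_fieldTr_pow_eq_zero_add_one (hF : Fintype.card F = p ^ m) (hm : 1 ≤ m)
    (hω : ∀ x : F, x ≠ 0 → ∃ n : ℕ, x = ω ^ n) (hord : orderOf ω = e * (p - 1)) :
    (p - 1) * #{i : ZMod e | fieldTr p m (ω ^ i.val) = 0} + 1 = p ^ (m - 1) := by
  have hp := (Fact.out : p.Prime).two_le
  rw [← card_fieldTr_eq_zero hF hm, card_filter_eq_mul_card_add_one hω (by omega) hord
    (fun x => fieldTr p m x = 0) (fieldTr_zero (by omega)) (periodic_fieldTr_pow_eq_zero hp hord)]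

theorem sub_one_mul_card_fieldTr_pow_eq_zero_and_add_one (hF : Fintype.card F = p ^ m)
    (hm : 2 ≤ m) (hω : ∀ x : F, x ≠ 0 → ∃ n : ℕ, x = ω ^ n) (hord : orderOf ω = e * (p - 1))
    {g : ZMod e} (hg : g ≠ 0) :
    (p - 1) * #{i : ZMod e | fieldTr p m (ω ^ i.val) = 0 ∧
      fieldTr p m (ω ^ g.val * ω ^ i.val) = 0} + 1 = p ^ (m - 2) := by
  have hp := (Fact.out : p.Prime).two_le
  have hg' : (ω ^ g.val) ^ p ≠ ω ^ g.val := by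
    rw [ne_eq, pow_pow_eq_self_iff_dvd hp hord]
    exact fun hdvd => hg ((ZMod.val_eq_zero g).mp (Nat.eq_zero_of_dvd_of_lt hdvd (ZMod.val_lt g)))
  have hzero : fieldTr p m (0 : F) = 0 := fieldTr_zero (by omega)
  have hperiod : Periodic
      (fun n => fieldTr p m (ω ^ n) = 0 ∧ fieldTr p m (ω ^ g.val * ω ^ n) = 0) e := fun n =>
    propext (and_congr (periodic_fieldTr_pow_eq_zero hp hord n).to_iff
      (fieldTr_mul_pow_add_eq_zero_iff hp hord _ n))
  rw [← card_fieldTr_eq_zero_and_fieldTr_mul_eq_zero hF hm hg',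
    card_filter_eq_mul_card_add_one hω (by omega) hord _ ⟨hzero, by rw [mul_zero, hzero]⟩ hperiod]

end Exponents

/-- With e = (p^m−1)/(p−1) and ω a primitive element of GF(p^m), the set
D = {i : 0 ≤ i ≤ e−1, Tr(ω^i) = 0} is an
(e, (p^(m-1)−1)/(p−1), (p^(m-2)−1)/(p−1)) (Singer) difference set in (Z_e, +). -/
theorem denniston_stmt10 (p m e : ℕ) (hp : p.Prime) (hm : 2 ≤ m)
    [NeZero e] (he : e * (p - 1) = p ^ m - 1)
    (F : Type) [Field F] [Fintype F] (hF : Fintype.card F = p ^ m)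
    (ω : F) (hω : ∀ x : F, x ≠ 0 → ∃ n : ℕ, x = ω ^ n)
    (D : Finset (ZMod e))
    (hD : ∀ i : ZMod e, i ∈ D ↔ fieldTr p m (ω ^ i.val) = 0) :
    IsDiffSet D e ((p ^ (m - 1) - 1) / (p - 1)) ((p ^ (m - 2) - 1) / (p - 1)) := by
  classical
  have : Fact p.Prime := ⟨hp⟩
  have := charP_of_card_eq_prime_pow hF
  let := ZMod.algebra F p
  have hp1 : 0 < p - 1 := Nat.sub_pos_of_lt hp.one_lt
  have hord : orderOf ω = e * (p - 1) := by
    rw [orderOf_eq_card_sub_one hω (hF ▸ hm.trans_lt (Nat.lt_pow_self hp.one_lt)), hF, he]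
  refine ⟨ZMod.card e, ?_, fun g hg => ?_⟩
  · rw [← sub_one_mul_card_fieldTr_pow_eq_zero_add_one hF (by omega) hω hord, Nat.add_sub_cancel,
      Nat.mul_div_cancel_left _ hp1]
    congr 1
    ext i
    simp [hD]
  · rw [card_filter_sub_eq_card_filter_add_mem,
      ← sub_one_mul_card_fieldTr_pow_eq_zero_and_add_one hF hm hω hord hg, Nat.add_sub_cancel,
      Nat.mul_div_cancel_left _ hp1]
    congr 1
    ext j
    simp [hD, fieldTr_pow_val_add_eq_zero_iff hp.two_le hord]
end

section
/- Let G be a finite abelian group of order v and D a k-subset of G with D = −D and 0 ∉ D, where k, λ, μ are positive integers satisfying k^2 = k + λk + μ(v−k−1). Then D is a (v,k,λ,μ) partial difference set in G if and only if for every nonprincipal character χ of G, the character sum χ(D) = Σ_{d∈D} χ(d) lies in { (λ−μ ± √((μ−λ)^2 + 4(k−μ)))/2 }. -/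
/-!
Let `N(g)` count the pairs `(a, b) ∈ D × D` with `a - b = g`. Its Fourier coefficient at a
character `ψ` is `ψ(D) ψ(-D) = ψ(D)²`, as `D = -D`. The PDS condition says that `N` is the function
`M = μ + (k - μ) δ₀ + (λ - μ) 1_D`, whose coefficient is `(k - μ) + (λ - μ) ψ(D)` at a nonprincipal
`ψ`; at the principal character both coefficients equal `k²`, by the parameter identity. Since a
function on `G` is determined by its Fourier coefficients, `D` is a PDS iff
`ψ(D)² = (λ - μ) ψ(D) + (k - μ)` for all nonprincipal `ψ`, and the two roots of this quadratic are
the values in the statement.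
-/

open Finset

section
variable {G : Type*} [AddCommGroup G]

lemma sum_comp_neg_of_neg_mem {M : Type*} [AddCommMonoid M] {D : Finset G}
    (hsym : ∀ d ∈ D, -d ∈ D) (f : G → M) : ∑ d ∈ D, f (-d) = ∑ d ∈ D, f d :=
  sum_nbij' (fun d => -d) (fun d => -d) hsym hsym (by simp) (by simp) (by simp)

variable [DecidableEq G]

def diffCount (D : Finset G) (g : G) : ℕ :=
  ((D ×ˢ D).filter (fun q => q.1 - q.2 = g)).card

def pdsProfile (D : Finset G) (k l μ : ℕ) (g : G) : ℕ :=
  if g = 0 then k else if g ∈ D then l else μ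

lemma diffCount_zero (D : Finset G) : diffCount D 0 = D.card := by
  simp only [diffCount, sub_eq_zero, ← diag_eq_filter, diag_card]

variable [Fintype G]

lemma sum_diffCount_mul_addChar {R : Type*} [CommSemiring R] (D : Finset G) (ψ : AddChar G R) :
    ∑ g, (diffCount D g : R) * ψ g = (∑ a ∈ D, ψ a) * ∑ b ∈ D, ψ (-b) := by
  have hfiber : ∀ g, (diffCount D g : R) * ψ g
      = ∑ q ∈ (D ×ˢ D).filter (fun q => q.1 - q.2 = g), ψ (q.1 - q.2) := fun g => by
    rw [sum_congr rfl fun q hq => by rw [(mem_filter.1 hq).2], sum_const, nsmul_eq_mul,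
      diffCount]
  simp_rw [hfiber]
  rw [sum_fiberwise (D ×ˢ D) (fun q => q.1 - q.2) (fun q => ψ (q.1 - q.2)), sum_product,
    sum_mul_sum]
  simp_rw [sub_eq_add_neg, AddChar.map_add_eq_mul]

lemma sum_pdsProfile_mul_addChar {R : Type*} [CommRing R] {D : Finset G} (h0 : (0 : G) ∉ D)
    (k l μ : ℕ) (ψ : AddChar G R) :
    ∑ g, (pdsProfile D k l μ g : R) * ψ g
      = μ * ∑ g, ψ g + (k - μ) + (l - μ) * ∑ d ∈ D, ψ d := by
  have hsplit : ∀ g, (pdsProfile D k l μ g : R) * ψ g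
      = μ * ψ g + (if g = 0 then ((k : R) - μ) * ψ g else 0)
        + (if g ∈ D then ((l : R) - μ) * ψ g else 0) := fun g => by
    by_cases hg : g = 0
    · subst hg; simp [pdsProfile, h0]
    · by_cases hgD : g ∈ D
      · simp [pdsProfile, hg, hgD]; ring
      · simp [pdsProfile, hg, hgD]
  simp_rw [hsplit]
  rw [sum_add_distrib, sum_add_distrib, ← mul_sum, sum_ite_eq', sum_ite_mem, univ_inter,
    ← mul_sum]
  simp

lemma forall_sum_mul_addChar_eq_iff {f f' : G → ℂ} :
    (∀ ψ : AddChar G ℂ, ∑ a, f a * ψ a = ∑ a, f' a * ψ a) ↔ f = f' := by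
  refine ⟨fun h => ?_, fun h _ => h ▸ rfl⟩
  have inversion : ∀ (f : G → ℂ) b,
      ∑ ψ : AddChar G ℂ, (∑ a, f a * ψ a) * ψ (-b) = Fintype.card G * f b := fun f b => by
    simp_rw [sum_mul, mul_assoc, ← AddChar.map_add_eq_mul, ← sub_eq_add_neg]
    rw [sum_comm]
    simp_rw [← mul_sum, AddChar.sum_apply_eq_ite, sub_eq_zero, mul_ite, mul_zero,
      sum_ite_eq', mem_univ, if_true, mul_comm]
  funext b
  have hb : (Fintype.card G : ℂ) * f b = Fintype.card G * f' b := by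
    rw [← inversion, ← inversion]
    simp_rw [h]
  exact mul_left_cancel₀ (Nat.cast_ne_zero.2 Fintype.card_ne_zero) hb

lemma sum_diffCount_eq_sum_pdsProfile_iff {R : Type*} [CommRing R] [IsDomain R] {D : Finset G}
    (hsym : ∀ d ∈ D, -d ∈ D) (h0 : (0 : G) ∉ D) (k l μ : ℕ) {ψ : AddChar G R} (hψ : ψ ≠ 0) :
    ∑ g, (diffCount D g : R) * ψ g = ∑ g, (pdsProfile D k l μ g : R) * ψ g ↔
      (∑ d ∈ D, ψ d) ^ 2 = (l - μ) * ∑ d ∈ D, ψ d + (k - μ) := by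
  classical
  rw [sum_diffCount_mul_addChar, sum_comp_neg_of_neg_mem hsym, sum_pdsProfile_mul_addChar h0,
    AddChar.sum_eq_ite, if_neg hψ, sq]
  constructor <;> intro h <;> linear_combination h

lemma sum_diffCount_eq_sum_pdsProfile_principal {R : Type*} [CommRing R] {v k l μ : ℕ}
    (hv : Fintype.card G = v) (hparam : (k : ℤ) ^ 2 = k + l * k + μ * (v - k - 1))
    {D : Finset G} (hcard : D.card = k) (h0 : (0 : G) ∉ D) :
    ∑ g, (diffCount D g : R) * (0 : AddChar G R) g
      = ∑ g, (pdsProfile D k l μ g : R) * (0 : AddChar G R) g := by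
  have hparamR := congrArg (Int.cast : ℤ → R) hparam
  push_cast at hparamR
  rw [sum_diffCount_mul_addChar, sum_pdsProfile_mul_addChar h0]
  simp only [AddChar.zero_apply, sum_const, hcard, card_univ, hv, nsmul_eq_mul, mul_one]
  linear_combination hparamR

end

lemma isPDS_iff_diffCount_eq {G : Type} [AddCommGroup G] [Fintype G] [DecidableEq G]
    {D : Finset G} {v k l μ : ℕ} (hv : Fintype.card G = v) (hcard : D.card = k) :
    IsPDS D v k l μ ↔ diffCount D = pdsProfile D k l μ := by
  refine ⟨fun ⟨_, _, hcount⟩ => funext fun g => ?_, fun h => ⟨hv, hcard, fun g hg => ?_⟩⟩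
  · by_cases hg : g = 0
    · rw [hg, diffCount_zero, hcard, pdsProfile, if_pos rfl]
    · rw [pdsProfile, if_neg hg, ← hcount g hg, diffCount]
  · rw [← diffCount, h, pdsProfile, if_neg hg]

lemma sq_eq_mul_add_iff {K : Type*} [Field K] [NeZero (2 : K)] {c e s x : K}
    (hs : s * s = c ^ 2 + 4 * e) :
    x ^ 2 = c * x + e ↔ x = (c + s) / 2 ∨ x = (c - s) / 2 := by
  have hdiscrim : discrim 1 (-c) (-e) = s * s := by rw [discrim, hs]; ring
  have hroots := quadratic_eq_zero_iff one_ne_zero hdiscrim x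
  rw [neg_neg, mul_one, one_mul] at hroots
  rw [← hroots]
  constructor <;> intro h <;> linear_combination h

lemma pds_discr_nonneg {v k l μ : ℕ} (hk : 0 < k) (hkv : k < v)
    (hparam : (k : ℤ) ^ 2 = k + l * k + μ * (v - k - 1)) :
    0 ≤ ((μ : ℝ) - l) ^ 2 + 4 * ((k : ℝ) - μ) := by
  suffices h : (0 : ℤ) ≤ ((μ : ℤ) - l) ^ 2 + 4 * ((k : ℤ) - μ) by exact_mod_cast h
  have hkv' : (k : ℤ) + 1 ≤ v := by exact_mod_cast hkv
  -- `k (k - 1 - λ) = μ (v - k - 1) ≥ 0` forces `λ < k`; for `μ > k` then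
  -- `(μ - λ)² ≥ (μ - k + 1)² ≥ 4 (μ - k)`.
  have hlk : (l : ℤ) + 1 ≤ k := by nlinarith
  rcases le_or_gt (μ : ℤ) k with h | h
  · nlinarith
  · nlinarith [sq_nonneg ((μ : ℤ) - k - 1)]

lemma isPDS_iff_forall_addChar_sq_eq {G : Type} [AddCommGroup G] [Fintype G] [DecidableEq G]
    {v k l μ : ℕ} (hv : Fintype.card G = v) (hparam : (k : ℤ) ^ 2 = k + l * k + μ * (v - k - 1))
    {D : Finset G} (hcard : D.card = k) (hsym : ∀ d ∈ D, -d ∈ D) (h0 : (0 : G) ∉ D) :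
    IsPDS D v k l μ ↔ ∀ ψ : AddChar G ℂ, ψ ≠ 0 →
      (∑ d ∈ D, ψ d) ^ 2 = (l - μ) * ∑ d ∈ D, ψ d + (k - μ) := by
  rw [isPDS_iff_diffCount_eq hv hcard, ← (Nat.cast_injective (R := ℂ)).comp_left.eq_iff,
    ← forall_sum_mul_addChar_eq_iff]
  simp only [Function.comp_apply]
  refine forall_congr' fun ψ => ?_
  rcases eq_or_ne ψ 0 with rfl | hψ
  · simp only [sum_diffCount_eq_sum_pdsProfile_principal hv hparam hcard h0, ne_eq,
      not_true_eq_false, IsEmpty.forall_iff]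
  · rw [sum_diffCount_eq_sum_pdsProfile_iff hsym h0 k l μ hψ]
    exact (imp_iff_right hψ).symm

theorem denniston_stmt14_general (G : Type) [AddCommGroup G] [Fintype G] [DecidableEq G]
    (v k l μ : ℕ) (hk : 0 < k)
    (hv : Fintype.card G = v)
    (hparam : (k : ℤ) ^ 2 = k + l * k + μ * (v - k - 1))
    (D : Finset G) (hcard : D.card = k)
    (hsym : ∀ d ∈ D, -d ∈ D) (h0 : (0 : G) ∉ D) :
    IsPDS D v k l μ ↔
      ∀ χ : AddChar G ℂ, (∃ a : G, χ a ≠ 1) →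
        (∑ d ∈ D, χ d
            = ((((l : ℝ) - μ) + Real.sqrt (((μ : ℝ) - l) ^ 2 + 4 * ((k : ℝ) - μ))) / 2 : ℝ) ∨
         ∑ d ∈ D, χ d
            = ((((l : ℝ) - μ) - Real.sqrt (((μ : ℝ) - l) ^ 2 + 4 * ((k : ℝ) - μ))) / 2 : ℝ)) := by
  have hΔ := pds_discr_nonneg hk (hv ▸ hcard ▸ card_lt_univ_of_notMem h0) hparam
  set s := √(((μ : ℝ) - l) ^ 2 + 4 * ((k : ℝ) - μ))
  have hs : (s : ℂ) * s = ((l : ℂ) - μ) ^ 2 + 4 * ((k : ℂ) - μ) := by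
    rw [← Complex.ofReal_mul, Real.mul_self_sqrt hΔ]
    push_cast
    ring
  rw [isPDS_iff_forall_addChar_sq_eq hv hparam hcard hsym h0]
  refine forall_congr' fun χ => ?_
  rw [AddChar.ne_zero_iff, sq_eq_mul_add_iff hs]
  push_cast
  rfl

/-- Let G be a finite abelian group of order v and D a k-subset with
D = −D, 0 ∉ D, and k² = k + λk + μ(v−k−1). Then D is a (v,k,λ,μ) PDS iff every
nonprincipal character χ of G has χ(D) ∈ {(λ−μ ± √((μ−λ)² + 4(k−μ)))/2}. -/
theorem denniston_stmt14 (G : Type) [AddCommGroup G] [Fintype G] [DecidableEq G]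
    (v k l μ : ℕ) (hk : 0 < k) (hl : 0 < l) (hμ : 0 < μ)
    (hv : Fintype.card G = v)
    (hparam : (k : ℤ) ^ 2 = k + l * k + μ * (v - k - 1))
    (D : Finset G) (hcard : D.card = k)
    (hsym : ∀ d ∈ D, -d ∈ D) (h0 : (0 : G) ∉ D) :
    IsPDS D v k l μ ↔
      ∀ χ : AddChar G ℂ, (∃ a : G, χ a ≠ 1) →
        (∑ d ∈ D, χ d
            = ((((l : ℝ) - μ) + Real.sqrt (((μ : ℝ) - l) ^ 2 + 4 * ((k : ℝ) - μ))) / 2 : ℝ) ∨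
         ∑ d ∈ D, χ d
            = ((((l : ℝ) - μ) - Real.sqrt (((μ : ℝ) - l) ^ 2 + 4 * ((k : ℝ) - μ))) / 2 : ℝ)) :=
  denniston_stmt14_general G v k l μ hk hv hparam D hcard hsym h0
end

section
/- Let p be an odd prime and m ≥ 2. For every nonprincipal character Φ = χ × ψ of GF(p^m)^+ × GF(p^{2m})^+ with χ principal and ψ nonprincipal, the character sum Φ(D) over the set D = ⋃_{i=0}^{e−1} (ω^i⟨ω^e⟩) × (α^i⟨α^e⟩ ∪ {0}) equals p^m − p, where e = (p^m−1)/(p−1), ω is a primitive element of GF(p^m), and α is a primitive element of GF(p^{2m}). -/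
private lemma gen_order {G : Type*} [Group G] [Fintype G] (g : G)
    (h : ∀ x : G, ∃ n : ℕ, x = g ^ n) : orderOf g = Fintype.card G := by
  rw [orderOf_eq_card_of_forall_mem_zpowers (fun x => by
    obtain ⟨n, rfl⟩ := h x; exact Subgroup.npow_mem_zpowers g n), Nat.card_eq_fintype_card]

private lemma coset_unique {G : Type*} [Group G] (g : G) {N e i j t t' : ℕ}
    (hN : orderOf g = N) (hdvd : e ∣ N) (hi : i < e) (hj : j < e)
    (h : g ^ (i + e * t) = g ^ (j + e * t')) : i = j := by
  have h1 : i + e * t ≡ j + e * t' [MOD N] := by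
    rw [← hN]; exact pow_eq_pow_iff_modEq.mp h
  have h2 : (i + e * t) % e = (j + e * t') % e := h1.of_dvd hdvd
  rwa [Nat.add_mul_mod_self_left, Nat.add_mul_mod_self_left,
    Nat.mod_eq_of_lt hi, Nat.mod_eq_of_lt hj] at h2

private lemma gen_ne_zero {K : Type*} [Field K] [Fintype K] [DecidableEq K] (α : K)
    (hα : ∀ x : K, x ≠ 0 → ∃ n : ℕ, x = α ^ n) (hcard : 3 ≤ Fintype.card K) : α ≠ 0 := by
  rintro rfl
  have hsub : (Finset.univ : Finset K) ⊆ {0, 1} := by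
    intro x _
    rcases eq_or_ne x 0 with rfl | hx
    · simp
    · obtain ⟨n, rfl⟩ := hα x hx
      cases n with
      | zero => simp
      | succ k => simp [zero_pow] at hx
  have h1 := Finset.card_le_card hsub
  have h2 : ({0, 1} : Finset K).card ≤ 2 :=
    le_trans (Finset.card_insert_le _ _) (by simp)
  rw [Finset.card_univ] at h1
  omega

/-- For a nonprincipal character Φ = χ × ψ of GF(p^m)⁺ × GF(p^{2m})⁺ with
χ principal and ψ nonprincipal, the character sum Φ(D) = Σ_{d∈D} ψ(d.2) over
D = ⋃_{i=0}^{e−1} (ω^i⟨ω^e⟩) × (α^i⟨α^e⟩ ∪ {0}) equals p^m − p. -/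
theorem denniston_stmt18 (p m e : ℕ) (hp : p.Prime) (hodd : Odd p) (hm : 2 ≤ m)
    (he : e * (p - 1) = p ^ m - 1)
    (F K : Type) [Field F] [Fintype F] [DecidableEq F]
    [Field K] [Fintype K] [DecidableEq K]
    (hF : Fintype.card F = p ^ m) (hK : Fintype.card K = p ^ (2 * m))
    (ω : F) (hω : ∀ x : F, x ≠ 0 → ∃ n : ℕ, x = ω ^ n)
    (α : K) (hα : ∀ x : K, x ≠ 0 → ∃ n : ℕ, x = α ^ n)
    (D : Finset (F × K))
    (hD : (↑D : Set (F × K))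
        = ⋃ i ∈ Finset.range e,
            {q : F × K | (∃ s : ℕ, q.1 = ω ^ i * (ω ^ e) ^ s) ∧
              (q.2 = 0 ∨ ∃ t : ℕ, q.2 = α ^ i * (α ^ e) ^ t)})
    (ψ : AddChar K ℂ) (hψ : ∃ a : K, ψ a ≠ 1) :
    ∑ d ∈ D, ψ d.2 = (p : ℂ) ^ m - (p : ℂ) := by
  -- numeric facts
  classical
  have hp3 : 3 ≤ p := by
    have h2 := hp.two_le
    have ho := Nat.odd_iff.mp hodd
    omega
  have hq9 : 9 ≤ p ^ m :=
    le_trans (by norm_num : (9:ℕ) ≤ 3 ^ 2)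
      (le_trans (Nat.pow_le_pow_left hp3 2) (Nat.pow_le_pow_right (by omega) hm))
  have hq2m : 9 ≤ p ^ (2 * m) :=
    le_trans hq9 (Nat.pow_le_pow_right (by omega) (by omega))
  have hp2 : 2 ≤ p := hp.two_le
  have he1 : 1 ≤ e := by
    rcases Nat.eq_zero_or_pos e with rfl | h
    · rw [Nat.zero_mul] at he; omega
    · exact h
  have hedvd : e ∣ p ^ m - 1 := ⟨p - 1, he.symm⟩
  have hqdvd : p ^ m - 1 ∣ p ^ (2 * m) - 1 := by
    refine ⟨p ^ m + 1, ?_⟩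
    have h1 : 1 ≤ p ^ m := by omega
    have : p ^ (2 * m) = p ^ m * p ^ m := by rw [two_mul, pow_add]
    rw [this, Nat.sub_mul, Nat.mul_add, Nat.mul_one]
    omega
  have hedvd2 : e ∣ p ^ (2 * m) - 1 := hedvd.trans hqdvd
  -- nonzero generators
  have hω0 : ω ≠ 0 := gen_ne_zero ω hω (by omega)
  have hα0 : α ≠ 0 := gen_ne_zero α hα (by omega)
  set ωu : Fˣ := Units.mk0 ω hω0 with hωu
  set αu : Kˣ := Units.mk0 α hα0 with hαu
  have hωuc : (ωu : F) = ω := rfl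
  have hαuc : (αu : K) = α := rfl
  -- orders
  have hordω : orderOf ωu = p ^ m - 1 := by
    rw [gen_order ωu (fun u => by
      obtain ⟨n, hn⟩ := hω (u : F) u.ne_zero
      exact ⟨n, Units.ext (by rw [Units.val_pow_eq_pow_val, hωuc, ← hn])⟩),
      Fintype.card_units, hF]
  have hordα : orderOf αu = p ^ (2 * m) - 1 := by
    rw [gen_order αu (fun u => by
      obtain ⟨n, hn⟩ := hα (u : K) u.ne_zero
      exact ⟨n, Units.ext (by rw [Units.val_pow_eq_pow_val, hαuc, ← hn])⟩),
      Fintype.card_units, hK]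
  -- membership in D
  have memD : ∀ d : F × K, d ∈ D ↔ ∃ i < e,
      (∃ s : ℕ, d.1 = ω ^ i * (ω ^ e) ^ s) ∧
      (d.2 = 0 ∨ ∃ t : ℕ, d.2 = α ^ i * (α ^ e) ^ t) := by
    intro d
    have h := Set.ext_iff.mp hD d
    simp only [Finset.coe_sort_coe, Set.mem_iUnion, Set.mem_setOf_eq,
      Finset.mem_coe, Finset.mem_range] at h
    simpa only [exists_prop] using h
  -- ω^(q-1) = 1
  have hω1 : ω ^ (p ^ m - 1) = 1 := by
    have := pow_orderOf_eq_one ωu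
    rw [hordω] at this
    have := congrArg Units.val this
    rwa [Units.val_pow_eq_pow_val, hωuc] at this
  -- fiber over 0
  have hfib0 : (Finset.univ.filter (fun x : F => (x, (0:K)) ∈ D))
      = Finset.univ \ {0} := by
    ext x
    simp only [Finset.mem_filter, Finset.mem_univ, true_and, Finset.mem_sdiff,
      Finset.mem_singleton]
    rw [memD]
    constructor
    · rintro ⟨i, hi, ⟨s, hs⟩, -⟩
      simp only at hs
      rw [hs]
      exact mul_ne_zero (pow_ne_zero _ hω0) (pow_ne_zero _ (pow_ne_zero _ hω0))
    · intro hx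
      obtain ⟨n, rfl⟩ := hω x hx
      exact ⟨n % e, Nat.mod_lt _ (by omega),
        ⟨n / e, by rw [← pow_mul, ← pow_add, Nat.mod_add_div]⟩, Or.inl rfl⟩
  -- coset cardinality in F
  have hcoset : ∀ i : ℕ, (Finset.univ.filter
      (fun x : F => ∃ s : ℕ, x = ω ^ i * (ω ^ e) ^ s)).card = p - 1 := by
    intro i
    have hβord : orderOf (ωu ^ e) = p - 1 := by
      rw [orderOf_pow, hordω, Nat.gcd_eq_right hedvd, ← he,
        Nat.mul_div_cancel_left _ (by omega)]
    have himg : Finset.univ.filter (fun x : F => ∃ s : ℕ, x = ω ^ i * (ω ^ e) ^ s)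
        = (Finset.range (p - 1)).image (fun s => ω ^ i * (ω ^ e) ^ s) := by
      ext x
      simp only [Finset.mem_filter, Finset.mem_univ, true_and, Finset.mem_image,
        Finset.mem_range]
      constructor
      · rintro ⟨s, rfl⟩
        refine ⟨s % (p - 1), Nat.mod_lt _ (by omega), ?_⟩
        congr 1
        conv_rhs => rw [← Nat.mod_add_div s (p - 1)]
        rw [pow_add, pow_mul, ← pow_mul ω e (p-1), he, hω1, one_pow, mul_one]
      · rintro ⟨s, -, rfl⟩; exact ⟨s, rfl⟩
    rw [himg, Finset.card_image_of_injOn, Finset.card_range]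
    intro s hs t ht hst
    simp only [Finset.coe_range, Set.mem_Iio] at hs ht
    have h1 : ω ^ (i + e * s) = ω ^ (i + e * t) := by
      rw [pow_add, pow_add, pow_mul, pow_mul]; exact hst
    have h2 : (ωu ^ e) ^ s = (ωu ^ e) ^ t := by
      have : ω ^ i * (ω ^ e) ^ s = ω ^ i * (ω ^ e) ^ t := hst
      have h3 : (ω ^ e) ^ s = (ω ^ e) ^ t :=
        mul_left_cancel₀ (pow_ne_zero _ hω0) this
      exact Units.ext (by
        rw [Units.val_pow_eq_pow_val, Units.val_pow_eq_pow_val,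
          Units.val_pow_eq_pow_val, hωuc]; exact h3)
    have h4 := pow_eq_pow_iff_modEq.mp h2
    rw [hβord] at h4
    rw [Nat.ModEq, Nat.mod_eq_of_lt hs, Nat.mod_eq_of_lt ht] at h4
    exact h4
  -- fiber over nonzero y has cardinality p - 1
  have hfiby : ∀ y : K, y ≠ 0 →
      (Finset.univ.filter (fun x : F => (x, y) ∈ D)).card = p - 1 := by
    intro y hy
    obtain ⟨n, rfl⟩ := hα y hy
    have hkey : ∀ x : F, ((x, α ^ n) ∈ D) ↔
        ∃ s : ℕ, x = ω ^ (n % e) * (ω ^ e) ^ s := by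
      intro x
      rw [memD]
      constructor
      · rintro ⟨i, hi, ⟨s, hs⟩, hy2⟩
        simp only at hs hy2
        rcases hy2 with h0 | ⟨t, ht⟩
        · exact absurd h0 hy
        · have hα1 : α ^ (i + e * t) = α ^ (n % e + e * (n / e)) := by
            rw [pow_add, pow_mul, ← ht, Nat.mod_add_div]
          have hui : αu ^ (i + e * t) = αu ^ (n % e + e * (n / e)) :=
            Units.ext (by
              rw [Units.val_pow_eq_pow_val, Units.val_pow_eq_pow_val, hαuc]
              exact hα1)
          have hieq := coset_unique αu hordα hedvd2 hi
            (Nat.mod_lt _ (by omega)) hui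
          rw [← hieq]; exact ⟨s, hs⟩
      · rintro ⟨s, hs⟩
        exact ⟨n % e, Nat.mod_lt _ (by omega), ⟨s, hs⟩,
          Or.inr ⟨n / e, by rw [← pow_mul, ← pow_add, Nat.mod_add_div]⟩⟩
    rw [Finset.filter_congr (fun x _ => hkey x), hcoset]
  -- relate fiber in D to fiber in F
  have hfibcard : ∀ y : K, (D.filter (fun d => d.2 = y)).card
      = (Finset.univ.filter (fun x : F => (x, y) ∈ D)).card := by
    intro y
    have himg : D.filter (fun d => d.2 = y)
        = (Finset.univ.filter (fun x : F => (x, y) ∈ D)).image (fun x => (x, y)) := by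
      ext d
      simp only [Finset.mem_filter, Finset.mem_image, Finset.mem_univ, true_and]
      constructor
      · rintro ⟨hd, hdy⟩
        have hde : (d.1, y) = d := by rw [← hdy]
        exact ⟨d.1, hde ▸ hd, hde⟩
      · rintro ⟨x, hx, rfl⟩
        exact ⟨hx, rfl⟩
    rw [himg, Finset.card_image_of_injective _ (fun a b h => congrArg Prod.fst h)]
  -- the full character sum over K vanishes
  have hsum0 : ∑ y : K, ψ y = 0 := by
    refine AddChar.sum_eq_zero_of_ne_one ?_
    obtain ⟨a, ha⟩ := hψ
    intro h; rw [h] at ha; exact ha rfl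
  -- fiberwise decomposition
  have hstep : ∑ d ∈ D, ψ d.2
      = ∑ y : K, ((D.filter (fun d => d.2 = y)).card : ℂ) * ψ y := by
    rw [← Finset.sum_fiberwise_of_maps_to (g := fun d : F × K => d.2)
      (fun d _ => Finset.mem_univ _) (fun d => ψ d.2)]
    refine Finset.sum_congr rfl fun y _ => ?_
    rw [Finset.sum_congr rfl (fun d hd => by
        rw [(Finset.mem_filter.mp hd).2] : ∀ d ∈ D.filter (fun d => d.2 = y),
          ψ d.2 = ψ y), Finset.sum_const, nsmul_eq_mul]
  have hc0 : ((D.filter (fun d => d.2 = (0:K))).card : ℂ) = (p:ℂ)^m - 1 := by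
    rw [hfibcard, hfib0, Finset.card_sdiff_of_subset (by simp), Finset.card_univ, hF,
      Finset.card_singleton, Nat.cast_sub (by omega), Nat.cast_pow, Nat.cast_one]
  have hcy : ∀ y ∈ Finset.univ.erase (0:K),
      ((D.filter (fun d => d.2 = y)).card : ℂ) * ψ y = ((p:ℂ) - 1) * ψ y := by
    intro y hy
    rw [hfibcard, hfiby y (Finset.ne_of_mem_erase hy),
      Nat.cast_sub (by omega), Nat.cast_one]
  have herase : ∑ y ∈ Finset.univ.erase (0:K), ψ y = -1 := by
    have h := Finset.add_sum_erase Finset.univ (fun y => ψ y) (Finset.mem_univ (0:K))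
    have h2 : ψ 0 + ∑ y ∈ Finset.univ.erase (0:K), ψ y = 0 := h.trans hsum0
    rw [AddChar.map_zero_eq_one] at h2
    linear_combination h2
  rw [hstep, ← Finset.add_sum_erase _ _ (Finset.mem_univ (0 : K)), hc0,
    AddChar.map_zero_eq_one, mul_one, Finset.sum_congr rfl hcy, ← Finset.mul_sum,
    herase]
  ring
end
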